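/- arXiv:2412.03080 — 5 statements merged into one kernel-verified Lean document; each statement's English description precedes it below -/
import Mathlib

section
/- In hyperbolic space, with a, b material vectors as above and a+b ≠ 0, letting d₁ = d([a], [a⊕b]) and d₂ = d([b], [a⊕b]) be distances from each point to the mass center [a+b], the hyperbolic lever law holds: m_a · sinh d₁ = m_b · sinh d₂. -/
/-- The Lorentzian bilinear form on `ℝ^{n+1}` (last coordinate negative). -/
def lor {n : ℕ} (x y : Fin (n+1) → ℝ) : ℝ :=
  (∑ i, x i * y i) - 2 * x (Fin.last n) * y (Fin.last n)

lemma lor_symm {n : ℕ} (x y : Fin (n+1) → ℝ) : lor x y = lor y x := by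
  simp [lor, mul_comm]
  ring

lemma lor_smul_right {n : ℕ} (a : ℝ) (x y : Fin (n+1) → ℝ) :
    lor x (a • y) = a * lor x y := by
  simp only [lor, Pi.smul_apply, smul_eq_mul, mul_sub, Finset.mul_sum, mul_comm, mul_left_comm]
  ring

lemma lor_add_right {n : ℕ} (x y z : Fin (n+1) → ℝ) :
    lor x (y + z) = lor x y + lor x z := by
  simp only [lor, Pi.add_apply, mul_add, Finset.sum_add_distrib]
  ring

/-- Hyperbolic lever law: `m_a sinh d₁ = m_b sinh d₂`, where `d₁, d₂` are the
hyperbolic distances from `p` and `q` to the mass center `[a+b]`. -/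
theorem hyperbolic_lever_law (n : ℕ) (p q : Fin (n+1) → ℝ)
    (hp : lor p p = -1) (hp' : 0 < p (Fin.last n))
    (hq : lor q q = -1) (hq' : 0 < q (Fin.last n))
    (ma mb d₁ d₂ : ℝ) (hma : 0 < ma) (hmb : 0 < mb)
    (hne : ma • p + mb • q ≠ 0)
    (hd₁0 : 0 ≤ d₁) (hd₂0 : 0 ≤ d₂)
    (hd₁ : Real.cosh d₁ = -(lor p
      ((Real.sqrt (-(lor (ma • p + mb • q) (ma • p + mb • q))))⁻¹ • (ma • p + mb • q))))
    (hd₂ : Real.cosh d₂ = -(lor q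
      ((Real.sqrt (-(lor (ma • p + mb • q) (ma • p + mb • q))))⁻¹ • (ma • p + mb • q)))) :
    ma * Real.sinh d₁ = mb * Real.sinh d₂ := by
  set c := ma • p + mb • q with hc
  set t := lor p q with ht
  set s := Real.sqrt (-(lor c c)) with hs
  -- expand lor p c, lor q c
  have hpc : lor p c = -ma + mb * t := by
    rw [hc, lor_add_right, lor_smul_right, lor_smul_right, hp]; ring
  have hqc : lor q c = ma * t - mb := by
    rw [hc, lor_add_right, lor_smul_right, lor_smul_right, lor_symm q p, hq]; ring
  have hcc : lor c c = -(ma^2) - mb^2 + 2 * ma * mb * t := by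
    rw [hc, lor_add_right, lor_smul_right, lor_smul_right, lor_symm (ma • p + mb • q) p,
      lor_symm (ma • p + mb • q) q, ← hc, hpc, hqc]; ring
  have h1 : Real.cosh d₁ = s⁻¹ * (ma - mb * t) := by
    rw [hd₁, lor_smul_right, hpc]; ring
  have h2 : Real.cosh d₂ = s⁻¹ * (mb - ma * t) := by
    rw [hd₂, lor_smul_right, hqc]; ring
  have hs0 : 0 < s := by
    rcases lt_or_eq_of_le (Real.sqrt_nonneg (-(lor c c))) with h | h
    · exact h
    · exfalso
      have hsz : s = 0 := hs.trans h.symm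
      have : Real.cosh d₁ = 0 := by rw [h1, hsz, inv_zero, zero_mul]
      have := Real.one_le_cosh d₁
      linarith
  have hL : 0 < -(lor c c) := Real.sqrt_pos.mp hs0
  have hs2 : s ^ 2 = -(lor c c) := Real.sq_sqrt hL.le
  have hsinh1 : 0 ≤ Real.sinh d₁ := Real.sinh_nonneg_iff.mpr hd₁0
  have hsinh2 : 0 ≤ Real.sinh d₂ := Real.sinh_nonneg_iff.mpr hd₂0
  have e1 : Real.sinh d₁ ^ 2 = Real.cosh d₁ ^ 2 - 1 := by
    have := Real.cosh_sq d₁; linarith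
  have e2 : Real.sinh d₂ ^ 2 = Real.cosh d₂ ^ 2 - 1 := by
    have := Real.cosh_sq d₂; linarith
  have hsne : s ≠ 0 := ne_of_gt hs0
  have c1 : Real.cosh d₁ ^ 2 * s ^ 2 = (ma - mb * t) ^ 2 := by
    rw [h1]; field_simp
  have c2 : Real.cosh d₂ ^ 2 * s ^ 2 = (mb - ma * t) ^ 2 := by
    rw [h2]; field_simp
  have k1 : Real.sinh d₁ ^ 2 * s ^ 2 = mb ^ 2 * (t ^ 2 - 1) := by
    rw [e1, sub_mul, c1, hs2, hcc]; ring
  have k2 : Real.sinh d₂ ^ 2 * s ^ 2 = ma ^ 2 * (t ^ 2 - 1) := by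
    rw [e2, sub_mul, c2, hs2, hcc]; ring
  have key : (ma * Real.sinh d₁) ^ 2 = (mb * Real.sinh d₂) ^ 2 := by
    have hs2pos : (0:ℝ) < s ^ 2 := by positivity
    have : (ma * Real.sinh d₁) ^ 2 * s ^ 2 = (mb * Real.sinh d₂) ^ 2 * s ^ 2 := by
      linear_combination ma ^ 2 * k1 - mb ^ 2 * k2
    exact mul_right_cancel₀ (ne_of_gt hs2pos) this
  have hA : 0 ≤ ma * Real.sinh d₁ := by positivity
  have hB : 0 ≤ mb * Real.sinh d₂ := by positivity
  calc ma * Real.sinh d₁ = Real.sqrt ((ma * Real.sinh d₁) ^ 2) := (Real.sqrt_sq hA).symm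
    _ = Real.sqrt ((mb * Real.sinh d₂) ^ 2) := by rw [key]
    _ = mb * Real.sinh d₂ := Real.sqrt_sq hB
end

section
/- In spherical space, with a = m_a·p, b = m_b·q material vectors (p, q ∈ S^n unit vectors, a+b ≠ 0), letting d₁ and d₂ be the spherical distances from p and q respectively to the normalized mass center (a+b)/|a+b|, the spherical lever law holds: m_a · sin d₁ = m_b · sin d₂. -/
/-!
Let `c = a + b`. For unit `p`, `‖c‖ · m_a sin∠(p, c)` is the area `√(‖a‖²‖c‖² - ⟪a, c⟫²)` of the
parallelogram spanned by `a` and `c = a + b`, which equals the area spanned by `a` and `b`.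
That quantity is symmetric in `a` and `b`, so it also equals `‖c‖ · m_b sin∠(q, c)`; dividing by
`‖c‖ ≠ 0` gives the lever law once `d₁ = ∠(p, c)` and `d₂ = ∠(q, c)` are identified.
-/

open Real RealInnerProductSpace

namespace InnerProductGeometry

variable {V : Type*} [NormedAddCommGroup V] [InnerProductSpace ℝ V]

theorem norm_mul_sin_angle_add_eq {x y : V} (hxy : x + y ≠ 0) :
    ‖x‖ * sin (angle x (x + y)) = ‖y‖ * sin (angle y (x + y)) := by
  have hx := sin_angle_mul_norm_mul_norm x (x + y)
  have hy := sin_angle_mul_norm_mul_norm y (x + y)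
  have hgram : ⟪x, x⟫ * ⟪x + y, x + y⟫ - ⟪x, x + y⟫ * ⟪x, x + y⟫
      = ⟪y, y⟫ * ⟪x + y, x + y⟫ - ⟪y, x + y⟫ * ⟪y, x + y⟫ := by
    simp only [inner_add_left, inner_add_right, real_inner_comm x y]
    ring
  have hnorm : ‖x + y‖ ≠ 0 := norm_ne_zero_iff.mpr hxy
  apply mul_right_cancel₀ hnorm
  linear_combination hx - hy + congrArg Real.sqrt hgram

theorem eq_angle_of_cos_eq_inner {p c : V} {d : ℝ} (hp : ‖p‖ = 1) (hd₀ : 0 ≤ d) (hdπ : d ≤ π)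
    (hd : cos d = ⟪p, ‖c‖⁻¹ • c⟫) : d = angle p c := by
  rw [← arccos_cos hd₀ hdπ, hd, angle, inner_smul_right, hp, one_mul, inv_mul_eq_div]

end InnerProductGeometry

open InnerProductGeometry

/-- Spherical lever law: `m_a sin d₁ = m_b sin d₂`, where `d₁, d₂` are the
spherical distances from `p` and `q` to the mass center `(a+b)/‖a+b‖`. -/
theorem spherical_lever_law (n : ℕ) (p q : EuclideanSpace ℝ (Fin (n+1)))
    (hp : ‖p‖ = 1) (hq : ‖q‖ = 1) (ma mb d₁ d₂ : ℝ) (hma : 0 < ma) (hmb : 0 < mb)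
    (hne : ma • p + mb • q ≠ 0)
    (hd₁0 : 0 ≤ d₁) (hd₁π : d₁ ≤ Real.pi) (hd₂0 : 0 ≤ d₂) (hd₂π : d₂ ≤ Real.pi)
    (hd₁ : Real.cos d₁ = (inner ℝ p (‖ma • p + mb • q‖⁻¹ • (ma • p + mb • q)) : ℝ))
    (hd₂ : Real.cos d₂ = (inner ℝ q (‖ma • p + mb • q‖⁻¹ • (ma • p + mb • q)) : ℝ)) :
    ma * Real.sin d₁ = mb * Real.sin d₂ := by
  rw [eq_angle_of_cos_eq_inner hp hd₁0 hd₁π hd₁, eq_angle_of_cos_eq_inner hq hd₂0 hd₂π hd₂,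
    ← angle_smul_left_of_pos p _ hma, ← angle_smul_left_of_pos q _ hmb]
  simpa only [norm_smul, hp, hq, Real.norm_of_nonneg hma.le, Real.norm_of_nonneg hmb.le, mul_one]
    using norm_mul_sin_angle_add_eq hne
end

section
/- Let f: [0,π] → R⁺ be continuous with f(0) = 1, satisfying f(π − d) = f(d/2)·f(π − d/2) for all d ∈ [0,π], f(π/2) = 1, and the property that f(d/2) = 1 if and only if f(d) = 1. Then f is identically 1 on [0,π]. -/
/-!
The relations force `f = 1` on every dyadic multiple `k L / 2ⁿ` of `L = π`, by induction on `n`: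
if `f d = f (L - d) = 1`, then `f (d / 2) = 1` by the halving equivalence, and the functional
equation `f (L - d) = f (d / 2) f (L - d / 2)` gives `f (L - d / 2) = 1`. These two points are
exactly the dyadic points of the next level. Since the dyadic points are dense in `[0, L]`,
continuity gives `f = 1` everywhere.
-/

open Set Filter Topology

section Dyadic

variable {f : ℝ → ℝ} {L : ℝ}

lemma dyadic_mem_Icc (hL : 0 ≤ L) {n k : ℕ} (hk : k ≤ 2 ^ n) :
    (k : ℝ) * L / 2 ^ n ∈ Icc 0 L := by
  refine ⟨by positivity, div_le_of_le_mul₀ (by positivity) hL ?_⟩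
  rw [mul_comm L]
  exact mul_le_mul_of_nonneg_right (by exact_mod_cast hk) hL

lemma dyadic_reflect {n k : ℕ} (hk : k ≤ 2 ^ n) :
    ((2 ^ n - k : ℕ) : ℝ) * L / 2 ^ n = L - k * L / 2 ^ n := by
  rw [Nat.cast_sub hk]
  push_cast
  field_simp

lemma eq_one_at_half_of_eq_one
    (hfe : ∀ d ∈ Icc 0 L, f (L - d) = f (d / 2) * f (L - d / 2))
    (hiff : ∀ d ∈ Icc 0 L, (f (d / 2) = 1 ↔ f d = 1))
    {d : ℝ} (hd : d ∈ Icc 0 L) (hfd : f d = 1) (hfLd : f (L - d) = 1) :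
    f (d / 2) = 1 ∧ f (L - d / 2) = 1 := by
  have hhalf : f (d / 2) = 1 := (hiff d hd).2 hfd
  have h := hfe d hd
  rw [hfLd, hhalf, one_mul] at h
  exact ⟨hhalf, h.symm⟩

lemma eq_one_at_dyadic (hL : 0 ≤ L) (h0 : f 0 = 1)
    (hfe : ∀ d ∈ Icc 0 L, f (L - d) = f (d / 2) * f (L - d / 2))
    (hhalf : f (L / 2) = 1)
    (hiff : ∀ d ∈ Icc 0 L, (f (d / 2) = 1 ↔ f d = 1)) :
    ∀ n k : ℕ, k ≤ 2 ^ n → f (k * L / 2 ^ n) = 1 := by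
  intro n
  induction n with
  | zero =>
    intro k hk
    interval_cases k
    · simpa using h0
    · simpa using (hiff L ⟨hL, le_rfl⟩).1 hhalf
  | succ n ih =>
    have key : ∀ j : ℕ, j ≤ 2 ^ n → f (j * L / 2 ^ (n + 1)) = 1 ∧ f (L - j * L / 2 ^ (n + 1)) = 1 := by
      intro j hj
      rw [pow_succ, ← div_div]
      refine eq_one_at_half_of_eq_one hfe hiff (dyadic_mem_Icc hL hj) (ih j hj) ?_
      rw [← dyadic_reflect hj]
      exact ih _ (Nat.sub_le _ _)
    intro k hk
    rcases le_or_gt k (2 ^ n) with hkn | hkn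
    · exact (key k hkn).1
    · have hpow : 2 ^ (n + 1) = 2 * 2 ^ n := by ring
      have h := (key (2 ^ (n + 1) - k) (by omega)).2
      rwa [← dyadic_reflect (Nat.sub_le _ _), Nat.sub_sub_self hk] at h

end Dyadic

lemma natFloor_div_mul_mem_Ioc {x ε : ℝ} (hx : 0 ≤ x) (hε : 0 < ε) :
    (⌊x / ε⌋₊ : ℝ) * ε ∈ Ioc (x - ε) x := by
  constructor
  · have h := Nat.lt_floor_add_one (x / ε)
    rw [div_lt_iff₀ hε] at h
    linarith
  · exact (le_div_iff₀ hε).1 (Nat.floor_le (div_nonneg hx hε.le))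

lemma ContinuousOn.eq_of_eq_at_dyadic {f : ℝ → ℝ} {L c : ℝ} (hL : 0 < L)
    (hf : ContinuousOn f (Icc 0 L)) (hdyadic : ∀ n k : ℕ, k ≤ 2 ^ n → f (k * L / 2 ^ n) = c) :
    ∀ x ∈ Icc 0 L, f x = c := by
  intro x hx
  have hε : ∀ n : ℕ, 0 < L / 2 ^ n := fun n => by positivity
  have hε_lim : Tendsto (fun n : ℕ => L / 2 ^ n) atTop (𝓝 0) :=
    tendsto_const_nhds.div_atTop (tendsto_pow_atTop_atTop_of_one_lt one_lt_two)
  have hk : ∀ n : ℕ, ⌊x / (L / 2 ^ n)⌋₊ ≤ 2 ^ n := fun n =>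
    Nat.floor_le_of_le <| by
      rw [div_le_iff₀ (hε n), Nat.cast_pow, Nat.cast_ofNat, mul_div_cancel₀ _ (by positivity)]
      exact hx.2
  have happrox : ∀ n : ℕ, (⌊x / (L / 2 ^ n)⌋₊ : ℝ) * (L / 2 ^ n) ∈ Ioc (x - L / 2 ^ n) x :=
    fun n => natFloor_div_mul_mem_Ioc hx.1 (hε n)
  have hlim : Tendsto (fun n : ℕ => (⌊x / (L / 2 ^ n)⌋₊ : ℝ) * (L / 2 ^ n)) atTop (𝓝 x) := by
    refine tendsto_of_tendsto_of_tendsto_of_le_of_le ?_ tendsto_const_nhds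
      (fun n => (happrox n).1.le) (fun n => (happrox n).2)
    simpa using tendsto_const_nhds.sub hε_lim
  simp only [← mul_div_assoc] at hlim
  have hmem : ∀ n : ℕ, (⌊x / (L / 2 ^ n)⌋₊ : ℝ) * L / 2 ^ n ∈ Icc 0 L := fun n =>
    dyadic_mem_Icc hL.le (hk n)
  have hf_lim := (hf x hx).tendsto.comp (tendsto_nhdsWithin_iff.2 ⟨hlim, .of_forall hmem⟩)
  exact tendsto_nhds_unique hf_lim (tendsto_const_nhds.congr fun n => (hdyadic n _ (hk n)).symm)

open Real in
theorem f_identically_one_general (f : ℝ → ℝ)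
    (hcont : ContinuousOn f (Set.Icc 0 Real.pi))
    (h0 : f 0 = 1)
    (hfe : ∀ d ∈ Set.Icc 0 Real.pi, f (Real.pi - d) = f (d / 2) * f (Real.pi - d / 2))
    (hhalfpi : f (Real.pi / 2) = 1)
    (hiff : ∀ d ∈ Set.Icc 0 Real.pi, (f (d / 2) = 1 ↔ f d = 1)) :
    ∀ x ∈ Set.Icc 0 Real.pi, f x = 1 :=
  hcont.eq_of_eq_at_dyadic pi_pos (eq_one_at_dyadic pi_pos.le h0 hfe hhalfpi hiff)

open Real in
/-- A positive continuous function on `[0,π]` satisfying the functional relations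
of Lemma `s1` is identically `1`. -/
theorem f_identically_one (f : ℝ → ℝ)
    (hcont : ContinuousOn f (Set.Icc 0 Real.pi))
    (hpos : ∀ x ∈ Set.Icc 0 Real.pi, 0 < f x)
    (h0 : f 0 = 1)
    (hfe : ∀ d ∈ Set.Icc 0 Real.pi, f (Real.pi - d) = f (d / 2) * f (Real.pi - d / 2))
    (hhalfpi : f (Real.pi / 2) = 1)
    (hiff : ∀ d ∈ Set.Icc 0 Real.pi, (f (d / 2) = 1 ↔ f d = 1)) :
    ∀ x ∈ Set.Icc 0 Real.pi, f x = 1 :=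
  f_identically_one_general f hcont h0 hfe hhalfpi hiff
end

section
/- The centered area of a hyperbolic regular n-gon with side length a equals (na/2)·tanh(a/2)·cot(π/n). Equivalently, with α = tan(π/n)·coth(a/2), n·∫₀^{π/n} dφ/(α² cos²φ − sin²φ) = (na/2)·tanh(a/2)·cot(π/n). -/
/-!
With `α = tan(π/n)·coth(a/2)` the integrand has the explicit antiderivative
`(log(α + tan φ) - log(α - tan φ)) / (2α)`, since `α² cos² φ - sin² φ = cos² φ (α + tan φ)(α - tan φ)`.
At `φ = π/n` the ratio `(α + tan φ)/(α - tan φ)` equals `(1 + tanh(a/2))/(1 - tanh(a/2)) = exp a`,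
so the integral is `a / (2α)`.
-/

open Real Set

lemma sq_mul_cos_sq_sub_sin_sq_eq {α x : ℝ} (hx : cos x ≠ 0) :
    α ^ 2 * cos x ^ 2 - sin x ^ 2 = cos x ^ 2 * ((α + tan x) * (α - tan x)) := by
  rw [tan_eq_sin_div_cos]
  field_simp
  ring

lemma hasDerivAt_log_add_tan_sub_log_sub_tan {α x : ℝ} (hα : α ≠ 0) (hx : cos x ≠ 0)
    (hadd : α + tan x ≠ 0) (hsub : α - tan x ≠ 0) :
    HasDerivAt (fun φ => (log (α + tan φ) - log (α - tan φ)) / (2 * α))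
      (1 / (α ^ 2 * cos x ^ 2 - sin x ^ 2)) x := by
  have htan : HasDerivAt tan (1 / cos x ^ 2) x := hasDerivAt_tan hx
  refine ((((htan.const_add α).log hadd).sub ((htan.const_sub α).log hsub)).div_const
    (2 * α)).congr_deriv ?_
  rw [sq_mul_cos_sq_sub_sin_sq_eq hx]
  field_simp
  ring

theorem integral_one_div_sq_mul_cos_sq_sub_sin_sq {α θ : ℝ} (hθ₀ : 0 ≤ θ) (hθ : θ < π / 2)
    (hα : tan θ < α) :
    ∫ φ in (0 : ℝ)..θ, 1 / (α ^ 2 * cos φ ^ 2 - sin φ ^ 2)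
      = (log (α + tan θ) - log (α - tan θ)) / (2 * α) := by
  have hbounds : ∀ x ∈ uIcc 0 θ, 0 < cos x ∧ 0 ≤ tan x ∧ tan x < α := by
    intro x hx
    rw [uIcc_of_le hθ₀] at hx
    refine ⟨cos_pos_of_mem_Ioo ⟨by linarith [hx.1, pi_pos], hx.2.trans_lt hθ⟩,
      tan_nonneg_of_nonneg_of_le_pi_div_two hx.1 (hx.2.trans hθ.le), ?_⟩
    have hmem : ∀ y, 0 ≤ y → y ≤ θ → y ∈ Ioo (-(π / 2)) (π / 2) := fun y hy₀ hy =>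
      ⟨by linarith [pi_pos], hy.trans_lt hθ⟩
    exact (strictMonoOn_tan.monotoneOn (hmem x hx.1 hx.2) (hmem θ hθ₀ le_rfl) hx.2).trans_lt hα
  have hα₀ : 0 < α := (tan_nonneg_of_nonneg_of_le_pi_div_two hθ₀ hθ.le).trans_lt hα
  have hderiv : ∀ x ∈ uIcc 0 θ, HasDerivAt
      (fun φ => (log (α + tan φ) - log (α - tan φ)) / (2 * α))
      (1 / (α ^ 2 * cos x ^ 2 - sin x ^ 2)) x := by
    intro x hx
    obtain ⟨hcos, htan₀, htan⟩ := hbounds x hx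
    exact hasDerivAt_log_add_tan_sub_log_sub_tan hα₀.ne' hcos.ne' (by linarith) (by linarith)
  have hden : ∀ x ∈ uIcc 0 θ, α ^ 2 * cos x ^ 2 - sin x ^ 2 ≠ 0 := by
    intro x hx
    obtain ⟨hcos, htan₀, htan⟩ := hbounds x hx
    rw [sq_mul_cos_sq_sub_sin_sq_eq hcos.ne']
    have : 0 < α - tan x := by linarith
    positivity
  have hint : IntervalIntegrable (fun φ => 1 / (α ^ 2 * cos φ ^ 2 - sin φ ^ 2))
      MeasureTheory.volume 0 θ :=
    (continuousOn_const.div (by fun_prop) hden).intervalIntegrable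
  rw [intervalIntegral.integral_eq_sub_of_hasDerivAt hderiv hint]
  simp

lemma log_one_add_tanh_div_one_sub_tanh (u : ℝ) :
    log ((1 + tanh u) / (1 - tanh u)) = 2 * u := by
  have h := artanh_eq_half_log ⟨(neg_one_lt_tanh u).le, (tanh_lt_one u).le⟩
  rw [artanh_tanh] at h
  linarith

lemma log_div_tanh_add_sub_log_div_tanh_sub {t u : ℝ} (ht : t ≠ 0) (hu : tanh u ≠ 0) :
    log (t / tanh u + t) - log (t / tanh u - t) = 2 * u := by
  have hadd : 1 + tanh u ≠ 0 := by linarith [neg_one_lt_tanh u]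
  have hsub : 1 - tanh u ≠ 0 := by linarith [tanh_lt_one u]
  have hadd' : t / tanh u + t = t * (1 + tanh u) / tanh u := by field_simp
  have hsub' : t / tanh u - t = t * (1 - tanh u) / tanh u := by field_simp
  rw [hadd', hsub', ← log_div (div_ne_zero (mul_ne_zero ht hadd) hu)
    (div_ne_zero (mul_ne_zero ht hsub) hu),
    ← log_one_add_tanh_div_one_sub_tanh u]
  congr 1
  field_simp

theorem hyperbolic_regular_ngon_centered_area_general (n : ℕ) (hn : 3 ≤ n) (a α : ℝ)
    (hα : α = Real.tan (Real.pi / n) / Real.tanh (a / 2))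
    (hα1 : Real.tan (Real.pi / n) < α) :
    (n : ℝ) * ∫ φ in (0:ℝ)..(Real.pi / n),
        1 / (α ^ 2 * Real.cos φ ^ 2 - Real.sin φ ^ 2)
      = (n * a / 2) * Real.tanh (a / 2) / Real.tan (Real.pi / n) := by
  have hn₃ : (3 : ℝ) ≤ n := by exact_mod_cast hn
  have hθ₀ : 0 < π / n := by positivity
  have hθ : π / n < π / 2 :=
    div_lt_div_of_pos_left pi_pos two_pos (by linarith)
  have ht : 0 < tan (π / n) := tan_pos_of_pos_of_lt_pi_div_two hθ₀ hθ
  have hα₀ : α ≠ 0 := (ht.trans hα1).ne'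
  have hT : tanh (a / 2) ≠ 0 := by
    rintro hT
    simp [hα, hT] at hα₀
  rw [integral_one_div_sq_mul_cos_sq_sub_sin_sq hθ₀.le hθ hα1, hα,
    log_div_tanh_add_sub_log_div_tanh_sub ht.ne' hT]
  field_simp

/-- Centered area of the hyperbolic regular `n`-gon with side length `a`:
with `α = tan(π/n)·coth(a/2)`,
`n ∫₀^{π/n} dφ/(α²cos²φ − sin²φ) = (na/2)·tanh(a/2)·cot(π/n)`. -/
theorem hyperbolic_regular_ngon_centered_area (n : ℕ) (hn : 3 ≤ n) (a α : ℝ)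
    (ha : 0 < a)
    (hα : α = Real.tan (Real.pi / n) / Real.tanh (a / 2))
    (hα1 : Real.tan (Real.pi / n) < α) :
    (n : ℝ) * ∫ φ in (0:ℝ)..(Real.pi / n),
        1 / (α ^ 2 * Real.cos φ ^ 2 - Real.sin φ ^ 2)
      = (n * a / 2) * Real.tanh (a / 2) / Real.tan (Real.pi / n) :=
  hyperbolic_regular_ngon_centered_area_general n hn a α hα hα1
end

section
/- The volume of a spherical right circular cone in S³ with base radius r and height h equals π·(h − (sin h/√(tan² r + sin² h))·arctan(√(tan² r + sin² h)/cos h)). Equivalently, with a = cot r · sin h, π·∫₀^h dt/(1 + a² csc² t) equals this expression (for 0 < h < π/2, 0 < r < π/2). -/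
/-! Since `sin² t / (sin² t + a²) = 1 - a² / (a² + sin² t)`, the substitution `u = tan t` gives the
antiderivative `t - (a / √(1 + a²)) arctan ((√(1 + a²) / a) tan t)` on `(-π/2, π/2)`. For
`a = sin h / tan r` one has `√(1 + a²) = √(tan² r + sin² h) / tan r`, which turns its value at `h`
into the stated closed form. -/

open Real

lemma one_div_one_add_sq_mul_one_div_sq {s : ℝ} (hs : s ≠ 0) (a : ℝ) :
    1 / (1 + a ^ 2 * (1 / s) ^ 2) = s ^ 2 / (s ^ 2 + a ^ 2) := by
  have : s ^ 2 + a ^ 2 ≠ 0 := by positivity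
  field_simp

lemma hasDerivAt_sub_mul_arctan_mul_tan {a x : ℝ} (ha : a ≠ 0) (hx : cos x ≠ 0) :
    HasDerivAt (fun t ↦ t - a / √(1 + a ^ 2) * arctan (√(1 + a ^ 2) / a * tan t))
      (sin x ^ 2 / (sin x ^ 2 + a ^ 2)) x := by
  set c := √(1 + a ^ 2) / a
  have hc : c ^ 2 * a ^ 2 = 1 + a ^ 2 := by
    rw [div_pow, sq_sqrt (by positivity)]; field_simp
  have hc0 : c ≠ 0 := div_ne_zero (by positivity) ha
  have hac : a / √(1 + a ^ 2) = 1 / c := by simp [c]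
  have hF : HasDerivAt (fun t ↦ t - 1 / c * arctan (c * tan t))
      (1 - 1 / c * (1 / (1 + (c * tan x) ^ 2) * (c * (1 / cos x ^ 2)))) x :=
    (hasDerivAt_id x).sub
      (((hasDerivAt_arctan _).comp x ((hasDerivAt_tan hx).const_mul c)).const_mul (1 / c))
  clear_value c
  rw [hac]
  refine hF.congr_deriv ?_
  rw [tan_eq_sin_div_cos]
  field_simp
  linear_combination sin x ^ 2 * hc + a ^ 2 * sin_sq_add_cos_sq x

lemma integral_sin_sq_div_sin_sq_add_sq {a h : ℝ} (ha : a ≠ 0) (hh : |h| < π / 2) :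
    ∫ t in (0 : ℝ)..h, sin t ^ 2 / (sin t ^ 2 + a ^ 2)
      = h - a / √(1 + a ^ 2) * arctan (√(1 + a ^ 2) / a * tan h) := by
  have hcont : Continuous fun t ↦ sin t ^ 2 / (sin t ^ 2 + a ^ 2) :=
    (continuous_sin.pow 2).div ((continuous_sin.pow 2).add continuous_const)
      fun t ↦ by positivity
  have hcos : ∀ x ∈ Set.uIcc 0 h, cos x ≠ 0 := fun x hx ↦ by
    refine (cos_pos_of_mem_Ioo ?_).ne'
    rw [abs_lt] at hh
    rcases Set.mem_uIcc.1 hx with ⟨h1, h2⟩ | ⟨h1, h2⟩ <;> constructor <;> linarith [pi_pos]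
  rw [intervalIntegral.integral_eq_sub_of_hasDerivAt
    (fun x hx ↦ hasDerivAt_sub_mul_arctan_mul_tan ha (hcos x hx))
    (hcont.intervalIntegrable 0 h)]
  simp

lemma integral_one_div_one_add_sq_mul_csc_sq {a h : ℝ} (ha : a ≠ 0) (h0 : 0 ≤ h)
    (hh : h < π / 2) :
    ∫ t in (0 : ℝ)..h, 1 / (1 + a ^ 2 * (1 / sin t) ^ 2)
      = h - a / √(1 + a ^ 2) * arctan (√(1 + a ^ 2) / a * tan h) := by
  rw [← integral_sin_sq_div_sin_sq_add_sq ha (by rwa [abs_of_nonneg h0])]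
  refine intervalIntegral.integral_congr_ae (.of_forall fun t ht ↦ ?_)
  rw [Set.uIoc_of_le h0] at ht
  exact one_div_one_add_sq_mul_one_div_sq
    (sin_pos_of_pos_of_lt_pi ht.1 (by linarith [ht.2, pi_pos])).ne' a

lemma sqrt_one_add_div_sq (s : ℝ) {t : ℝ} (ht : 0 < t) :
    √(1 + (s / t) ^ 2) = √(t ^ 2 + s ^ 2) / t := by
  rw [eq_div_iff ht.ne', ← sqrt_sq ht.le, ← sqrt_mul (by positivity), sqrt_sq ht.le]
  congr 1
  field_simp

/-- Volume of the spherical right circular cone of base radius `r` and height `h`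
(`0 < r, h < π/2`): with `a = cot r · sin h`,
`π ∫₀^h dt/(1 + a² csc² t) = π (h − (sin h/√(tan²r+sin²h))·arctan(√(tan²r+sin²h)/cos h))`. -/
theorem spherical_cone_volume (r h a : ℝ) (hr : 0 < r) (hr2 : r < Real.pi / 2)
    (hh : 0 < h) (hh2 : h < Real.pi / 2) (ha : a = Real.sin h / Real.tan r) :
    Real.pi * ∫ t in (0:ℝ)..h, 1 / (1 + a ^ 2 * (1 / Real.sin t) ^ 2)
      = Real.pi * (h - (Real.sin h / Real.sqrt (Real.tan r ^ 2 + Real.sin h ^ 2)) *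
          Real.arctan (Real.sqrt (Real.tan r ^ 2 + Real.sin h ^ 2) / Real.cos h)) := by
  have htan : 0 < tan r := tan_pos_of_pos_of_lt_pi_div_two hr hr2
  have hsin : 0 < sin h := sin_pos_of_pos_of_lt_pi hh (by linarith [pi_pos])
  have ha0 : a ≠ 0 := by rw [ha]; positivity
  have hcoef : a / √(1 + a ^ 2) = sin h / √(tan r ^ 2 + sin h ^ 2) := by
    rw [ha, sqrt_one_add_div_sq _ htan]; field_simp
  have harg : √(1 + a ^ 2) / a * tan h = √(tan r ^ 2 + sin h ^ 2) / cos h := by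
    rw [ha, sqrt_one_add_div_sq _ htan, tan_eq_sin_div_cos h]; field_simp
  rw [integral_one_div_one_add_sq_mul_csc_sq ha0 hh.le hh2, hcoef, harg]
end
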